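/- Let A be a complex unital Banach algebra and let f : ℂ → A be analytic on a neighborhood of z, with f(w) a unit of A for all w near z, and with f'(z) and f''(z) units of A. Let g(w) = f(w)⁻¹ (analytic near z), and assume g''(z) and D f(z) := f(z) − 2·f'(z)·f''(z)⁻¹·f'(z) are units of A. Then g(z) − 2·g'(z)·g''(z)⁻¹·g'(z) = (f(z) − 2·f'(z)·f''(z)⁻¹·f'(z))⁻¹; in other words D(f⁻¹) = (D f)⁻¹. -/
import Mathlib


open Filter

/-- A function analytic at a point has derivative analytic at that point. -/
private lemma analyticAt_deriv {A : Type*} [NormedRing A] [NormedAlgebra ℂ A] [CompleteSpace A]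
    {f : ℂ → A} {z : ℂ} (hf : AnalyticAt ℂ f z) : AnalyticAt ℂ (deriv f) z := by
  have h : AnalyticOnNhd ℂ f {w | AnalyticAt ℂ f w} := fun w hw => hw
  exact h.deriv z hf

private lemma key_alg {A : Type*} [Ring A] (a b c gz g1 y X : A)
    (h2 : gz * a = 1) (hcy : c * y = 1)
    (hg1 : g1 = -(gz * (b * gz)))
    (hXkey : gz * X * gz * (2 * (b * (gz * b)) - c) = 1) :
    (gz - 2 * (g1 * (X * g1))) * (a - 2 * (b * (y * b))) = 1 := by
  subst hg1
  have hE : gz * X * gz * (c - 2 * (b * (gz * b))) = -1 := by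
    calc gz * X * gz * (c - 2 * (b * (gz * b)))
        = -(gz * X * gz * (2 * (b * (gz * b)) - c)) := by noncomm_ring
      _ = -1 := by rw [hXkey]
  have hinner : y + gz * X * gz - 2 * (gz * X * gz * (b * (gz * (b * y)))) = 0 := by
    calc y + gz * X * gz - 2 * (gz * X * gz * (b * (gz * (b * y))))
        = y + gz * X * gz * (c * y) - 2 * (gz * X * gz * (b * (gz * (b * y)))) := by
          rw [hcy, mul_one]
      _ = y + (gz * X * gz * (c - 2 * (b * (gz * b)))) * y := by noncomm_ring
      _ = y + (-1 : A) * y := by rw [hE]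
      _ = 0 := by noncomm_ring
  calc (gz - 2 * (-(gz * (b * gz)) * (X * -(gz * (b * gz))))) * (a - 2 * (b * (y * b)))
      = gz * a - 2 * (gz * (b * (y * b)))
        - 2 * (gz * (b * (gz * (X * (gz * (b * (gz * a)))))))
        + 4 * (gz * (b * (gz * (X * (gz * (b * (gz * (b * (y * b))))))))) := by noncomm_ring
    _ = 1 - 2 * (gz * (b * (y * b)))
        - 2 * (gz * (b * (gz * (X * (gz * (b * (1 : A)))))))
        + 4 * (gz * (b * (gz * (X * (gz * (b * (gz * (b * (y * b))))))))) := by rw [h2]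
    _ = 1 - 2 * (gz * (b * ((y + gz * X * gz
          - 2 * (gz * X * gz * (b * (gz * (b * y))))) * b))) := by noncomm_ring
    _ = 1 - 2 * (gz * (b * ((0 : A) * b))) := by rw [hinner]
    _ = 1 := by noncomm_ring

/-- The inversion case of the projective equivariance of the noncommutative
equivariant derivative `D f(z) = f(z) − 2·f'(z)·f''(z)⁻¹·f'(z)`:
`D(f⁻¹) = (D f)⁻¹`. -/
theorem noncommutative_D_inversion
    (A : Type*) [NormedRing A] [NormedAlgebra ℂ A] [CompleteSpace A]
    (f g : ℂ → A) (z : ℂ)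
    (hf : AnalyticAt ℂ f z)
    (hfu : ∀ᶠ w in nhds z, IsUnit (f w))
    (hf' : IsUnit (deriv f z)) (hf'' : IsUnit (deriv (deriv f) z))
    (hg : g = fun w => Ring.inverse (f w))
    (hg'' : IsUnit (deriv (deriv g) z))
    (hDf : IsUnit (f z - 2 * (deriv f z * (Ring.inverse (deriv (deriv f) z) * deriv f z)))) :
    g z - 2 * (deriv g z * (Ring.inverse (deriv (deriv g) z) * deriv g z))
      = Ring.inverse
          (f z - 2 * (deriv f z * (Ring.inverse (deriv (deriv f) z) * deriv f z))) := by
  -- notation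
  set a := f z with ha_def
  set b := deriv f z with hb_def
  set c := deriv (deriv f) z with hc_def
  have ha : IsUnit (f z) := hfu.self_of_nhds
  -- analyticity of g
  have hfa_ev : ∀ᶠ w in nhds z, AnalyticAt ℂ f w := hf.eventually_analyticAt
  have hga_ev : ∀ᶠ w in nhds z, AnalyticAt ℂ g w := by
    filter_upwards [hfa_ev, hfu] with w hw hu
    rw [hg]
    have h1 : AnalyticAt ℂ Ring.inverse (f w) := by
      have := analyticAt_inverse (𝕜 := ℂ) hu.unit
      rwa [hu.unit_spec] at this
    exact h1.comp hw
  have hga : AnalyticAt ℂ g z := hga_ev.self_of_nhds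
  -- first product identity: f * g = 1 near z
  have E1 : (fun w => f w * g w) =ᶠ[nhds z] fun _ => (1 : A) := by
    filter_upwards [hfu] with w hw
    rw [hg]
    exact Ring.mul_inverse_cancel _ hw
  -- differentiate: f' g + f g' = 0 near z
  have E2 : (fun w => deriv f w * g w + f w * deriv g w) =ᶠ[nhds z] fun _ => (0 : A) := by
    have D1 : deriv (fun w => f w * g w) =ᶠ[nhds z] deriv (fun _ : ℂ => (1 : A)) := E1.deriv
    have D2 : deriv (fun _ : ℂ => (1 : A)) = fun _ => (0 : A) := by
      funext w; simp
    have D3 : (fun w => deriv f w * g w + f w * deriv g w)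
        =ᶠ[nhds z] deriv (fun w => f w * g w) := by
      filter_upwards [hfa_ev, hga_ev] with w hfw hgw
      exact (deriv_mul hfw.differentiableAt hgw.differentiableAt).symm
    exact D3.trans (D1.trans (by rw [D2]))
  have hE2z : b * g z + a * deriv g z = 0 := E2.self_of_nhds
  -- differentiate again at z
  have h1d : HasDerivAt f b z := hf.differentiableAt.hasDerivAt
  have h2d : HasDerivAt g (deriv g z) z := hga.differentiableAt.hasDerivAt
  have h3d : HasDerivAt (deriv f) c z := (analyticAt_deriv hf).differentiableAt.hasDerivAt
  have h4d : HasDerivAt (deriv g) (deriv (deriv g) z) z :=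
    (analyticAt_deriv hga).differentiableAt.hasDerivAt
  have H : HasDerivAt (fun w => deriv f w * g w + f w * deriv g w)
      (c * g z + b * deriv g z + (b * deriv g z + a * deriv (deriv g) z)) z :=
    (h3d.mul h2d).add (h1d.mul h4d)
  have hE3z : c * g z + b * deriv g z + (b * deriv g z + a * deriv (deriv g) z) = 0 := by
    have e1 : deriv (fun w => deriv f w * g w + f w * deriv g w) z
        = deriv (fun _ : ℂ => (0 : A)) z := E2.deriv_eq
    rw [H.deriv] at e1
    simpa using e1
  -- basic inverse identities
  have hgza : g z * a = 1 := by rw [hg]; exact Ring.inverse_mul_cancel _ ha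
  have hagz : a * g z = 1 := by rw [hg]; exact Ring.mul_inverse_cancel _ ha
  have hcy : c * Ring.inverse c = 1 := Ring.mul_inverse_cancel _ hf''
  -- formula for g'
  have hg1 : deriv g z = -(g z * (b * g z)) := by
    have h5 : a * deriv g z = -(b * g z) :=
      (neg_eq_of_add_eq_zero_right hE2z).symm
    calc deriv g z = (g z * a) * deriv g z := by rw [hgza, one_mul]
      _ = g z * (a * deriv g z) := by rw [mul_assoc]
      _ = g z * -(b * g z) := by rw [h5]
      _ = -(g z * (b * g z)) := by rw [mul_neg]
  -- formula for g''
  have hg2 : a * deriv (deriv g) z = -(c * g z) - 2 * (b * deriv g z) := by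
    have := hE3z
    rw [show c * g z + b * deriv g z + (b * deriv g z + a * deriv (deriv g) z)
        = (c * g z + 2 * (b * deriv g z)) + a * deriv (deriv g) z from by noncomm_ring] at this
    rw [← neg_eq_of_add_eq_zero_right this]; noncomm_ring
  have hg2' : deriv (deriv g) z
      = g z * ((2 * (b * (g z * b)) - c) * g z) := by
    calc deriv (deriv g) z = (g z * a) * deriv (deriv g) z := by rw [hgza, one_mul]
      _ = g z * (a * deriv (deriv g) z) := by rw [mul_assoc]
      _ = g z * (-(c * g z) - 2 * (b * deriv g z)) := by rw [hg2]
      _ = g z * (-(c * g z) - 2 * (b * -(g z * (b * g z)))) := by rw [hg1]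
      _ = g z * ((2 * (b * (g z * b)) - c) * g z) := by noncomm_ring
  -- the key identity for X = (g'')⁻¹
  have hX1 : Ring.inverse (deriv (deriv g) z) * deriv (deriv g) z = 1 :=
    Ring.inverse_mul_cancel _ hg''
  have hXkey : g z * Ring.inverse (deriv (deriv g) z) * g z * (2 * (b * (g z * b)) - c)
      = 1 := by
    calc g z * Ring.inverse (deriv (deriv g) z) * g z * (2 * (b * (g z * b)) - c)
        = g z * Ring.inverse (deriv (deriv g) z) * g z * (2 * (b * (g z * b)) - c)
          * (g z * a) := by rw [hgza, mul_one]
      _ = g z * (Ring.inverse (deriv (deriv g) z)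
            * (g z * ((2 * (b * (g z * b)) - c) * g z))) * a := by noncomm_ring
      _ = g z * (Ring.inverse (deriv (deriv g) z) * deriv (deriv g) z) * a := by rw [hg2']
      _ = g z * a := by rw [hX1, mul_one]
      _ = 1 := hgza
  -- conclude
  have hmul : (g z - 2 * (deriv g z * (Ring.inverse (deriv (deriv g) z) * deriv g z)))
      * (a - 2 * (b * (Ring.inverse c * b))) = 1 :=
    key_alg a b c (g z) (deriv g z) (Ring.inverse c) (Ring.inverse (deriv (deriv g) z))
      hgza hcy hg1 hXkey
  obtain ⟨u, hu⟩ := hDf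
  have hmul' : (g z - 2 * (deriv g z * (Ring.inverse (deriv (deriv g) z) * deriv g z)))
      * (u : A) = 1 := by rw [hu]; exact hmul
  rw [← hu, Ring.inverse_unit]
  rw [← one_mul ((↑u⁻¹ : A)), ← hmul', mul_assoc, Units.mul_inv, mul_one]
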